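/- arXiv:2512.07152 — 4 statements merged into one kernel-verified Lean document; each statement's English description precedes it below -/
import Mathlib

section
/- Let A be a real unital Banach algebra, j ∈ A with j² = −1, and m, ṁ ∈ A with j·m = −m·j and j·ṁ = −ṁ·j. Suppose u := 1 + (1/2)·j·m is a unit, and set k := u·j·u⁻¹. Then the curve t ↦ (1 + (1/2)·j·(m + t·ṁ))·j·(1 + (1/2)·j·(m + t·ṁ))⁻¹ is differentiable at t = 0 with derivative (1/2)·(1 − k·j)·ṁ·u⁻¹. Moreover, replacing ṁ by j·ṁ multiplies this derivative on the left by k: (1/2)·(1 − k·j)·(j·ṁ)·u⁻¹ = k·((1/2)·(1 − k·j)·ṁ·u⁻¹). -/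
/-!
The curve is `t ↦ v t * j * (v t)⁻¹` with `v` affine, `v 0 = u` and `v' = ½ j ṁ`. The product
rule together with `d(x⁻¹) = -x⁻¹ dx x⁻¹` gives the derivative `½ (j ṁ j - k j ṁ) u⁻¹`, and
`j ṁ j = ṁ` because `ṁ` anticommutes with `j`. For holomorphy, `k` is again a complex structure,
and `j² = k² = -1` give `(1 - k j) j = j + k = k (1 - k j)`.
-/

section Algebra

variable {R : Type*} [Ring R] {j : R}

theorem mul_mul_eq_self_of_anticomm (hj : j * j = -1) {x : R} (hx : j * x = -(x * j)) :
    j * x * j = x := by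
  rw [hx, neg_mul, mul_assoc, hj, mul_neg_one, neg_neg]

theorem Units.conj_mul_conj_eq_neg_one (u : Rˣ) (hj : j * j = -1) :
    (u * j * ↑u⁻¹ : R) * (u * j * ↑u⁻¹) = -1 := by
  calc (u * j * ↑u⁻¹ : R) * (u * j * ↑u⁻¹) = u * j * (↑u⁻¹ * u) * j * ↑u⁻¹ := by noncomm_ring
    _ = -1 := by rw [u.inv_mul, mul_one, mul_assoc (u : R), hj]; simp

theorem one_sub_mul_mul_eq_mul_one_sub_mul {k : R} (hj : j * j = -1) (hk : k * k = -1) :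
    (1 - k * j) * j = k * (1 - k * j) := by
  calc (1 - k * j) * j = j - k * (j * j) := by noncomm_ring
    _ = k - k * k * j := by rw [hj, hk]; noncomm_ring
    _ = k * (1 - k * j) := by noncomm_ring

end Algebra

section Calculus

variable {𝕜 : Type*} [NontriviallyNormedField 𝕜] {A : Type*} [NormedRing A] [NormedAlgebra 𝕜 A]
  [HasSummableGeomSeries A] {v : 𝕜 → A} {v' : A} {t : 𝕜}

theorem HasDerivAt.ringInverse (u : Aˣ) (hv : HasDerivAt v v' t) (hvt : v t = u) :
    HasDerivAt (fun s => Ring.inverse (v s)) (-(↑u⁻¹ * v' * ↑u⁻¹)) t := by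
  have := (hvt ▸ hasFDerivAt_ringInverse (𝕜 := 𝕜) u).comp_hasDerivAt t hv
  simpa [Function.comp_def] using this

theorem HasDerivAt.mul_mul_ringInverse (u : Aˣ) (hv : HasDerivAt v v' t) (hvt : v t = u)
    (j : A) :
    HasDerivAt (fun s => v s * j * Ring.inverse (v s))
      (v' * j * ↑u⁻¹ - u * j * ↑u⁻¹ * v' * ↑u⁻¹) t := by
  refine ((hv.mul_const j).mul (hv.ringInverse u hvt)).congr_deriv ?_
  rw [hvt, Ring.inverse_unit]
  noncomm_ring

end Calculus

theorem stmt3_general (A : Type*) [NormedRing A] [NormedAlgebra ℝ A] [CompleteSpace A]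
    (j m m' : A) (hj : j * j = -1)
    (hm' : j * m' = -(m' * j))
    (u : Aˣ) (hu : (u : A) = 1 + (1/2 : ℝ) • (j * m)) :
    (HasDerivAt
      (fun t : ℝ =>
        (1 + (1/2 : ℝ) • (j * (m + t • m'))) * j *
          Ring.inverse (1 + (1/2 : ℝ) • (j * (m + t • m'))))
      ((1/2 : ℝ) • ((1 - (u : A) * j * (↑u⁻¹ : A) * j) * m' * (↑u⁻¹ : A))) 0) ∧
    (1/2 : ℝ) • ((1 - (u : A) * j * (↑u⁻¹ : A) * j) * (j * m') * (↑u⁻¹ : A)) =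
      ((u : A) * j * (↑u⁻¹ : A)) *
        ((1/2 : ℝ) • ((1 - (u : A) * j * (↑u⁻¹ : A) * j) * m' * (↑u⁻¹ : A))) := by
  have hcurve : HasDerivAt (fun t : ℝ => (1 : A) + (1/2 : ℝ) • (j * (m + t • m')))
      ((1/2 : ℝ) • (j * m')) 0 := by
    simpa using ((((hasDerivAt_id (0 : ℝ)).smul_const m').const_add m).const_mul j
      |>.const_smul (1/2 : ℝ)).const_add 1
  have hcurve_zero : (1 : A) + (1/2 : ℝ) • (j * (m + (0 : ℝ) • m')) = u := by simp [hu]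
  constructor
  · refine (hcurve.mul_mul_ringInverse u hcurve_zero j).congr_deriv ?_
    simp only [smul_mul_assoc, mul_smul_comm, ← smul_sub]
    rw [mul_mul_eq_self_of_anticomm hj hm']
    noncomm_ring
  · set k : A := u * j * ↑u⁻¹
    rw [mul_smul_comm]
    congr 1
    rw [← mul_assoc (1 - k * j) j,
      one_sub_mul_mul_eq_mul_one_sub_mul hj (u.conj_mul_conj_eq_neg_one hj),
      mul_assoc k, mul_assoc k]

/-- In a real unital Banach algebra, with `j² = -1`, `jm = -mj`,
`jm' = -m'j`, and `u := 1 + ½jm` a unit, the curve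
`t ↦ (1 + ½j(m + t·m'))·j·(1 + ½j(m + t·m'))⁻¹` is differentiable at `t = 0`
with derivative `½(1 - kj)·m'·u⁻¹`, where `k := u·j·u⁻¹`; moreover replacing
`m'` by `j·m'` multiplies this derivative on the left by `k`. -/
theorem stmt3 (A : Type*) [NormedRing A] [NormedAlgebra ℝ A] [CompleteSpace A]
    (j m m' : A) (hj : j * j = -1)
    (hm : j * m = -(m * j)) (hm' : j * m' = -(m' * j))
    (u : Aˣ) (hu : (u : A) = 1 + (1/2 : ℝ) • (j * m)) :
    (HasDerivAt
      (fun t : ℝ =>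
        (1 + (1/2 : ℝ) • (j * (m + t • m'))) * j *
          Ring.inverse (1 + (1/2 : ℝ) • (j * (m + t • m'))))
      ((1/2 : ℝ) • ((1 - (u : A) * j * (↑u⁻¹ : A) * j) * m' * (↑u⁻¹ : A))) 0) ∧
    (1/2 : ℝ) • ((1 - (u : A) * j * (↑u⁻¹ : A) * j) * (j * m') * (↑u⁻¹ : A)) =
      ((u : A) * j * (↑u⁻¹ : A)) *
        ((1/2 : ℝ) • ((1 - (u : A) * j * (↑u⁻¹ : A) * j) * m' * (↑u⁻¹ : A))) :=
  stmt3_general A j m m' hj hm' u hu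
end

section
/- Let V be a real vector space and U a complex vector space. Let J, M be ℝ-linear endomorphisms of V with J ∘ J = −id and J ∘ M + M ∘ J = 0, and suppose u := id + (1/2)·J∘M is invertible. Let α : V → U be ℝ-linear with α ∘ J = i·α. Then α ∘ (id − (1/2)·J∘M) ∘ (u ∘ J ∘ u⁻¹) = i·(α ∘ (id − (1/2)·J∘M)). -/
/-- Let `J, M : V →ₗ[ℝ] V` with `J² = -id`, `JM + MJ = 0`, and let
`u := id + ½·J∘M` be invertible. If `α : V →ₗ[ℝ] U` (with `U` complex)
satisfies `α ∘ J = i·α`, then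
`α ∘ (id - ½·J∘M) ∘ (u ∘ J ∘ u⁻¹) = i·(α ∘ (id - ½·J∘M))`. -/
theorem stmt4 (V U : Type*) [AddCommGroup V] [Module ℝ V]
    [AddCommGroup U] [Module ℂ U]
    (J M : V →ₗ[ℝ] V)
    (hJ : ∀ v, J (J v) = -v)
    (hJM : ∀ v, J (M v) + M (J v) = 0)
    (u : V ≃ₗ[ℝ] V) (hu : ∀ v, u v = v + (1/2 : ℝ) • J (M v))
    (α : V →ₗ[ℝ] U) (hα : ∀ v, α (J v) = Complex.I • α v) :
    ∀ v, α (u (J (u.symm v)) - (1/2 : ℝ) • J (M (u (J (u.symm v))))) =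
      Complex.I • α (v - (1/2 : ℝ) • J (M v)) := by
  intro v
  have hMJ : ∀ x, M (J x) = - J (M x) := fun x =>
    eq_neg_of_add_eq_zero_right (hJM x)
  have hJMJ : ∀ x, J (M (J x)) = M x := fun x => by
    rw [hMJ, map_neg, hJ, neg_neg]
  set w := u.symm v with hw
  have hv : u w = v := u.apply_symm_apply v
  rw [← hv]
  have huJ : u (J w) = J w + (1/2 : ℝ) • M w := by rw [hu, hJMJ]
  have h1 : u (J w) - (1/2 : ℝ) • J (M (u (J w)))
      = J (w - (1/4 : ℝ) • M (M w)) := by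
    rw [huJ, map_add, map_smul, map_add, map_smul, hJMJ, map_sub, map_smul]
    module
  have h2 : u w - (1/2 : ℝ) • J (M (u w)) = w - (1/4 : ℝ) • M (M w) := by
    rw [hu, map_add, map_smul, map_add, map_smul, hMJ, map_neg, hJ]
    module
  rw [h1, h2, hα]
end

section
/- Let V and H be real vector spaces, ι an ℝ-linear endomorphism of V with ι∘ι = −id, j an ℝ-linear endomorphism of H with j∘j = −id, β : H → V ℝ-linear with ι∘β + β∘j = 0, and m an ℝ-linear endomorphism of H with j∘m + m∘j = 0. Define the ℝ-linear endomorphisms J and M of V × H by J(v,h) = (ι v, j h) and M(v,h) = (β h, m h). If u := id_H + (1/2)·j∘m is invertible, then U := id + (1/2)·J∘M is invertible, and the conjugate E := U ∘ J ∘ U⁻¹ is given by E(v,h) = (ι v + β(u⁻¹ h), (u ∘ j ∘ u⁻¹) h). -/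
/-- In the splitting `V × H`, with `J(v,h) = (ι v, j h)`,
`M(v,h) = (β h, m h)`, and `u = id_H + ½ j∘m` invertible, the endomorphism
`U = id + ½ J∘M` is invertible, and `E := U ∘ J ∘ U⁻¹` is given by
`E(v,h) = (ι v + β (u⁻¹ h), u (j (u⁻¹ h)))`. -/
theorem stmt6 (V H : Type*) [AddCommGroup V] [Module ℝ V]
    [AddCommGroup H] [Module ℝ H]
    (ι : V →ₗ[ℝ] V) (j : H →ₗ[ℝ] H) (β : H →ₗ[ℝ] V) (m : H →ₗ[ℝ] H)
    (hι : ∀ v, ι (ι v) = -v) (hj : ∀ h, j (j h) = -h)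
    (hβ : ∀ h, ι (β h) + β (j h) = 0)
    (hm : ∀ h, j (m h) + m (j h) = 0)
    (J M : V × H →ₗ[ℝ] V × H)
    (hJ : ∀ (v : V) (h : H), J (v, h) = (ι v, j h))
    (hM : ∀ (v : V) (h : H), M (v, h) = (β h, m h))
    (u : H ≃ₗ[ℝ] H) (hu : ∀ h, u h = h + (1/2 : ℝ) • j (m h)) :
    ∃ U : (V × H) ≃ₗ[ℝ] (V × H),
      (∀ p : V × H, U p = p + (1/2 : ℝ) • J (M p)) ∧
      ∀ (v : V) (h : H),
        U (J (U.symm (v, h))) = (ι v + β (u.symm h), u (j (u.symm h))) := by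
  refine ⟨{ toFun := fun p => (p.1 + (1/2 : ℝ) • ι (β p.2), u p.2)
            map_add' := ?_
            map_smul' := ?_
            invFun := fun p => (p.1 - (1/2 : ℝ) • ι (β (u.symm p.2)), u.symm p.2)
            left_inv := ?_
            right_inv := ?_ }, ?_, ?_⟩
  · intro p q
    simp [Prod.ext_iff, map_add, smul_add]
    abel
  · intro c p
    simp [Prod.ext_iff, map_smul, smul_comm c]
  · intro p
    simp [Prod.ext_iff]
  · intro p
    simp [Prod.ext_iff]
  · intro p
    have := hM p.1 p.2
    simp only [Prod.mk.eta] at this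
    rw [this, hJ]
    simp [Prod.ext_iff, hu p.2]
  · intro v h
    simp only [LinearEquiv.coe_symm_mk, LinearEquiv.coe_mk, LinearMap.coe_mk, AddHom.coe_mk]
    rw [hJ]
    have h1 : ι (ι (β (u.symm h))) = -(β (u.symm h)) := hι _
    have h3 : ι (β (j (u.symm h))) = β (u.symm h) := by
      have h4 := hβ (j (u.symm h))
      rw [hj] at h4
      simp only [map_neg] at h4
      exact add_neg_eq_zero.mp h4
    refine Prod.ext ?_ rfl
    simp only [map_sub, map_smul, h1, h3]
    module
end

section
/- Let A be a real unital Banach algebra and j : ℝ × ℝ → A a twice continuously differentiable map such that j(s,t)² = −1 for all (s,t) and such that the Cauchy–Riemann equation ∂_t j = j · (∂_s j) holds at every point. Then at every point, ∂²_s j + ∂²_t j = 2 · j · (∂_s j)². -/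
/-!
Differentiating the Cauchy–Riemann equation `j_t = j j_s` in `s` gives `∂_s j_t = j_s² + j j_ss`,
and by symmetry of the second derivative this is also `∂_t j_s`. Differentiating it in `t` then
gives `j_tt = j_t j_s + j ∂_t j_s = j j_s² + j (j_s² + j j_ss) = 2 j j_s² - j_ss`, using `j² = -1`.
-/

section DirectionalDerivatives

variable {𝕜 : Type*} [NontriviallyNormedField 𝕜]
  {E : Type*} [NormedAddCommGroup E] [NormedSpace 𝕜 E]

theorem fderiv_fderiv_apply_const {F : Type*} [NormedAddCommGroup F] [NormedSpace 𝕜 F]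
    {f : E → F} {p : E} (hf : DifferentiableAt 𝕜 (fderiv 𝕜 f) p) (v w : E) :
    fderiv 𝕜 (fun q => fderiv 𝕜 f q v) p w = fderiv 𝕜 (fderiv 𝕜 f) p w v := by
  simp [fderiv_clm_apply hf (differentiableAt_const v)]

theorem fderiv_fun_mul_apply' {𝔸 : Type*} [NormedRing 𝔸] [NormedAlgebra 𝕜 𝔸]
    {a b : E → 𝔸} {p : E} (ha : DifferentiableAt 𝕜 a p) (hb : DifferentiableAt 𝕜 b p)
    (w : E) :
    fderiv 𝕜 (fun q => a q * b q) p w = fderiv 𝕜 a p w * b p + a p * fderiv 𝕜 b p w := by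
  simp [fderiv_fun_mul' ha hb, add_comm]

end DirectionalDerivatives

theorem laplacian_of_cauchyRiemann {𝕜 : Type*} [RCLike 𝕜]
    {E : Type*} [NormedAddCommGroup E] [NormedSpace 𝕜 E]
    {A : Type*} [NormedRing A] [NormedAlgebra 𝕜 A]
    {j : E → A} (hj : ContDiff 𝕜 2 j) (v w : E) (p : E) (hsq : j p * j p = -1)
    (hCR : ∀ q, fderiv 𝕜 j q w = j q * fderiv 𝕜 j q v) :
    fderiv 𝕜 (fun q => fderiv 𝕜 j q v) p v + fderiv 𝕜 (fun q => fderiv 𝕜 j q w) p w =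
      2 * (j p * (fderiv 𝕜 j p v * fderiv 𝕜 j p v)) := by
  have hj₁ : Differentiable 𝕜 j := hj.differentiable two_ne_zero
  have hj₂ : Differentiable 𝕜 (fderiv 𝕜 j) :=
    (hj.fderiv_right (m := 1) le_rfl).differentiable one_ne_zero
  have hsymm : IsSymmSndFDerivAt 𝕜 j p := hj.contDiffAt.isSymmSndFDerivAt (by simp)
  have hjv : Differentiable 𝕜 (fun q => fderiv 𝕜 j q v) := fun q =>
    (hj₂ q).clm_apply (differentiableAt_const v)
  have hCR' : (fun q => fderiv 𝕜 j q w) = fun q => j q * fderiv 𝕜 j q v := funext hCR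
  set js := fderiv 𝕜 j p v
  set jss := fderiv 𝕜 (fun q => fderiv 𝕜 j q v) p v
  have hmixed : fderiv 𝕜 (fun q => fderiv 𝕜 j q v) p w = js * js + j p * jss := by
    rw [fderiv_fderiv_apply_const (hj₂ p), hsymm.eq, ← fderiv_fderiv_apply_const (hj₂ p),
      hCR', fderiv_fun_mul_apply' (hj₁ p) (hjv p)]
  have htt : fderiv 𝕜 (fun q => fderiv 𝕜 j q w) p w =
      j p * js * js + j p * (js * js + j p * jss) := by
    rw [hCR', fderiv_fun_mul_apply' (hj₁ p) (hjv p), hmixed, hCR]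
  have hjjss : j p * (j p * jss) = -jss := by rw [← mul_assoc, hsq, neg_one_mul]
  rw [htt, mul_add, hjjss, mul_assoc]
  noncomm_ring

/-- Let `A` be a real unital Banach algebra and
`j : ℝ × ℝ → A` a C² map with `j(s,t)² = -1` pointwise, satisfying the
Cauchy–Riemann equation `∂_t j = j · ∂_s j`. Then
`∂²_s j + ∂²_t j = 2·j·(∂_s j)²` at every point. -/
theorem stmt14 (A : Type*) [NormedRing A] [NormedAlgebra ℝ A]
    (j : ℝ × ℝ → A) (hsmooth : ContDiff ℝ 2 j)
    (hsq : ∀ p : ℝ × ℝ, j p * j p = -1)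
    (hCR : ∀ p : ℝ × ℝ, fderiv ℝ j p (0, 1) = j p * fderiv ℝ j p (1, 0)) :
    ∀ p : ℝ × ℝ,
      fderiv ℝ (fun q => fderiv ℝ j q (1, 0)) p (1, 0) +
        fderiv ℝ (fun q => fderiv ℝ j q (0, 1)) p (0, 1) =
      2 * (j p * (fderiv ℝ j p (1, 0) * fderiv ℝ j p (1, 0))) := fun p =>
  laplacian_of_cauchyRiemann hsmooth (1, 0) (0, 1) p (hsq p) hCR
end
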